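/- Let K ≥ 1, n_t ≥ 1, n_r ≥ 1 be integers and let r be a real number with 0 ≤ r ≤ min(n_t, n_r/(K+1)). Then min over k ∈ {1, …, K} of d*_{k·n_t, n_r}(k·r) equals d*_{n_t, n_r}(r); i.e., in the lightly loaded regime the symmetric diversity-multiplexing tradeoff of the K-user MIMO multiple access channel coincides with the single-user tradeoff. -/

import Mathlib

/-- The Zheng–Tse diversity-multiplexing tradeoff curve `d*_{m,n}` of an `m × n` MIMO
Rayleigh point-to-point channel: the continuous piecewise-linear function with
`d*(k) = (m−k)(n−k)` at integers `k` and affine on each interval `[k, k+1]`; explicitly,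
for `k = ⌊r⌋`, `d*(r) = (m−k)(n−k) − (r−k)(m+n−2k−1)`. -/
noncomputable def dstar (m n : ℕ) (r : ℝ) : ℝ :=
  ((m : ℝ) - (⌊r⌋ : ℝ)) * ((n : ℝ) - (⌊r⌋ : ℝ)) -
    (r - (⌊r⌋ : ℝ)) * ((m : ℝ) + (n : ℝ) - 2 * (⌊r⌋ : ℝ) - 1)

/-!
Write `d*_{m,n}(r) = (m - r)(n - r) + φ(r)` with `φ(r) = {r}(1 - {r})`. Then
`d*_{km,n}(kr) - d*_{m,n}(r) = (m - r)(k - 1)(n - (k + 1)r) - (φ(r) - φ(kr))`, and the first term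
is nonnegative when `r ≤ m` and `(k + 1)r ≤ n`. It dominates the defect
`φ(r) - φ(kr) = ({r} - {kr})(1 - {kr} - {r})` by integrality: `{kr} - k{r}` and
`n - (k + 1)r + {kr} + {r}` are integers, and `m - r ≥ 1 - {r}` as soon as `{r} > 0`.
Hence every `k ≤ K` does at least as well as `k = 1`.
-/

open Int

lemma dstar_eq_sub_mul_sub_add_fract (m n : ℕ) (r : ℝ) :
    dstar m n r = ((m : ℝ) - r) * ((n : ℝ) - r) + fract r * (1 - fract r) := by
  unfold dstar fract
  ring

/-- Writing `s = k t - M` and `X + s + t = N` with `M, N` integers, the product can only be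
positive if `s < t` and `s + t < 1`, when `M ≤ k - 1` and `N ≥ 1`, or if `t < s` and `s + t > 1`,
when `M ≤ k - 2` and `N ≥ 2`; these bound the two factors by `(1 - t) (k - 1)` and `X`, resp.
by `1 - t` and `(k - 1) X`. -/
lemma sub_mul_one_sub_sub_le {k : ℕ} (hk : 1 ≤ k) {t s X : ℝ} {M N : ℤ} (ht1 : t < 1)
    (hs0 : 0 ≤ s) (hs1 : s < 1) (hsM : s = k * t - M) (hX : 0 ≤ X) (hN : X + s + t = N) :
    (t - s) * (1 - s - t) ≤ (1 - t) * (k - 1) * X := by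
  have hk' : (1 : ℝ) ≤ k := by exact_mod_cast hk
  have hRHS : 0 ≤ (1 - t) * (k - 1) * X := by
    apply mul_nonneg (mul_nonneg _ _) hX <;> linarith
  rcases le_or_gt ((t - s) * (1 - s - t)) 0 with hnonpos | hpos
  · exact hnonpos.trans hRHS
  rcases pos_and_pos_or_neg_and_neg_of_mul_pos hpos with ⟨hst, hst1⟩ | ⟨hts, hst1⟩
  · have hN1 : (1 : ℝ) ≤ N := by
      have : 0 < N := by exact_mod_cast (by linarith : (0 : ℝ) < N)
      exact_mod_cast this
    have hMk : (M : ℝ) + 1 ≤ k := by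
      have : M < k := by exact_mod_cast (by nlinarith : (M : ℝ) < k)
      exact_mod_cast this
    have hfirst : t - s ≤ (1 - t) * (k - 1) := by nlinarith
    have hsecond : 1 - s - t ≤ X := by linarith
    exact mul_le_mul hfirst hsecond (by linarith) (by nlinarith)
  · have hN2 : (2 : ℝ) ≤ N := by
      have : 1 < N := by exact_mod_cast (by linarith : (1 : ℝ) < N)
      exact_mod_cast this
    have hMk : (M : ℝ) + 2 ≤ k := by
      have : M + 1 < k := by
        exact_mod_cast (by nlinarith [mul_le_mul_of_nonneg_left ht1.le (sub_nonneg.2 hk')] :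
          (M : ℝ) + 1 < k)
      exact_mod_cast (by omega : M + 2 ≤ k)
    have hfirst : s - t ≤ 1 - t := by linarith
    have hsecond : s + t - 1 ≤ (k - 1) * X := by nlinarith
    calc (t - s) * (1 - s - t) = (s - t) * (s + t - 1) := by ring
      _ ≤ (1 - t) * ((k - 1) * X) := mul_le_mul hfirst hsecond (by linarith) (by linarith)
      _ = (1 - t) * (k - 1) * X := by ring

lemma fract_mul_one_sub_sub_le {k n : ℕ} (hk : 1 ≤ k) {r : ℝ} (hr : ((k : ℝ) + 1) * r ≤ n) :
    fract r * (1 - fract r) - fract (k * r) * (1 - fract (k * r)) ≤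
      (1 - fract r) * (k - 1) * (n - (k + 1) * r) := by
  have hsM : fract ((k : ℝ) * r) = k * fract r - (⌊(k : ℝ) * r⌋ - k * ⌊r⌋ : ℤ) := by
    push_cast
    unfold fract
    ring
  have hN : (n - (k + 1) * r) + fract ((k : ℝ) * r) + fract r =
      ((n - ⌊(k : ℝ) * r⌋ - ⌊r⌋ : ℤ) : ℝ) := by
    push_cast
    unfold fract
    ring
  calc fract r * (1 - fract r) - fract (k * r) * (1 - fract (k * r))
      = (fract r - fract (k * r)) * (1 - fract (k * r) - fract r) := by ring
    _ ≤ _ := sub_mul_one_sub_sub_le hk (fract_lt_one r) (fract_nonneg _)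
        (fract_lt_one _) hsM (by linarith) hN

lemma dstar_le_dstar_mul {k m n : ℕ} (hk : 1 ≤ k) {r : ℝ} (hrm : r ≤ m)
    (hrn : ((k : ℝ) + 1) * r ≤ n) :
    dstar m n r ≤ dstar (k * m) n (k * r) := by
  have hk' : (1 : ℝ) ≤ k := by exact_mod_cast hk
  have hdiff : dstar (k * m) n (k * r) - dstar m n r =
      (m - r) * ((k - 1) * (n - (k + 1) * r)) -
        (fract r * (1 - fract r) - fract (k * r) * (1 - fract (k * r))) := by
    rw [dstar_eq_sub_mul_sub_add_fract, dstar_eq_sub_mul_sub_add_fract]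
    push_cast
    ring
  have hfactor : 0 ≤ (k - 1) * (n - (k + 1) * r) := mul_nonneg (by linarith) (by linarith)
  suffices fract r * (1 - fract r) - fract (k * r) * (1 - fract (k * r)) ≤
      (m - r) * ((k - 1) * (n - (k + 1) * r)) by linarith
  rcases (fract_nonneg r).eq_or_lt with ht | ht
  · rw [← ht]
    have := mul_nonneg (fract_nonneg ((k : ℝ) * r)) (sub_nonneg.2 (fract_lt_one ((k : ℝ) * r)).le)
    linarith [mul_nonneg (sub_nonneg.2 hrm) hfactor]
  · have hfloor : (⌊r⌋ : ℝ) + 1 ≤ m := by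
      have : ⌊r⌋ < m := by exact_mod_cast (by linarith [self_sub_floor r] : (⌊r⌋ : ℝ) < m)
      exact_mod_cast this
    have hm : 1 - fract r ≤ m - r := by linarith [self_sub_floor r]
    calc _ ≤ (1 - fract r) * (k - 1) * (n - (k + 1) * r) := fract_mul_one_sub_sub_le hk hrn
      _ ≤ (m - r) * ((k - 1) * (n - (k + 1) * r)) := by
        rw [mul_assoc]
        exact mul_le_mul_of_nonneg_right hm hfactor

theorem mac_dmt_lightly_loaded_general (K nt nr : ℕ) (hK : 1 ≤ K)
    (r : ℝ) (hr0 : 0 ≤ r) (hr1 : r ≤ min (nt : ℝ) ((nr : ℝ) / ((K : ℝ) + 1))) :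
    (Finset.Icc 1 K).inf' (Finset.nonempty_Icc.mpr hK)
      (fun k => dstar (k * nt) nr ((k : ℝ) * r)) = dstar nt nr r := by
  have hrnt : r ≤ nt := hr1.trans (min_le_left _ _)
  have hrnr : ((K : ℝ) + 1) * r ≤ nr := by
    rw [← le_div_iff₀' (by positivity)]
    exact hr1.trans (min_le_right _ _)
  refine le_antisymm ?_ (Finset.le_inf' _ _ fun k hk => ?_)
  · exact (Finset.inf'_le _ (Finset.left_mem_Icc.2 hK)).trans_eq (by simp)
  · obtain ⟨hk1, hkK⟩ := Finset.mem_Icc.1 hk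
    have hkK' : (k : ℝ) ≤ K := by exact_mod_cast hkK
    exact dstar_le_dstar_mul hk1 hrnt ((mul_le_mul_of_nonneg_right (by linarith) hr0).trans hrnr)

/-- Lightly loaded regime: for `0 ≤ r ≤ min(n_t, n_r/(K+1))`, the symmetric DMT
`min_{k=1,…,K} d*_{k·n_t, n_r}(k·r)` of the `K`-user MIMO multiple access channel
coincides with the single-user tradeoff `d*_{n_t, n_r}(r)`. -/
theorem mac_dmt_lightly_loaded (K nt nr : ℕ) (hK : 1 ≤ K) (hnt : 1 ≤ nt) (hnr : 1 ≤ nr)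
    (r : ℝ) (hr0 : 0 ≤ r) (hr1 : r ≤ min (nt : ℝ) ((nr : ℝ) / ((K : ℝ) + 1))) :
    (Finset.Icc 1 K).inf' (Finset.nonempty_Icc.mpr hK)
      (fun k => dstar (k * nt) nr ((k : ℝ) * r)) = dstar nt nr r :=
  mac_dmt_lightly_loaded_general K nt nr hK r hr0 hr1
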